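/- arXiv:2204.04754 — 2 statements merged into one kernel-verified Lean document; each statement's English description precedes it below -/
import Mathlib

section
/- Let $L_{high} = K \cdot L_{low}$ for positive integers $K, L_{low}$. For an image $x : (\mathbb{Z}/L_{high}) \times (\mathbb{Z}/L_{high}) \to \mathbb{R}$, define for each $(n_1, n_2) \in \{0,\dots,K-1\}^2$ the sub-image $x_{n_1,n_2}[\ell_1,\ell_2] := x[n_1 + \ell_1 K, n_2 + \ell_2 K]$ for $\ell_1,\ell_2 \in \{0,\dots,L_{low}-1\}$. Then for any shift $s = (s^1, s^2) \in (\mathbb{Z}/L_{high})^2$ and any $(m_1, m_2) \in \{0,\dots,L_{low}-1\}^2$, the down-sampled shifted image satisfies $(P R_s x)[m_1, m_2] = x[(m_1 K - s^1) \bmod L_{high}, (m_2 K - s^2) \bmod L_{high}]$, and this equals $(R_t x_{n_1,n_2})[m_1, m_2]$ where $n_i = (-s^i) \bmod K$ and $t^i = \lceil s^i / K \rceil \bmod L_{low}$ (i.e., every down-sampled circular shift of $x$ equals some circular shift on the low-resolution grid of one of the $K^2$ sub-images). -/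
lemma fact1 (K : ℕ) (hK : 0 < K) (v : ℕ) :
    (K - v % K) % K + v = ((v + K - 1) / K) * K := by
  obtain ⟨q, r, hr, rfl⟩ : ∃ q r, r < K ∧ v = K * q + r :=
    ⟨v / K, v % K, Nat.mod_lt _ hK, (Nat.div_add_mod v K).symm⟩
  rw [Nat.mul_add_mod, Nat.mod_eq_of_lt hr]
  rcases Nat.eq_zero_or_pos r with rfl | hrpos
  · rw [Nat.sub_zero, Nat.mod_self, zero_add, add_zero]
    have h1 : K * q + K - 1 = K * q + (K - 1) := by omega
    rw [h1, Nat.mul_add_div hK, Nat.div_eq_of_lt (by omega), add_zero, mul_comm]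
  · have h2 : (K - r) % K = K - r := Nat.mod_eq_of_lt (by omega)
    have h3 : K * q + r + K - 1 = K * (q + 1) + (r - 1) := by
      have : K * (q + 1) = K * q + K := by ring
      omega
    rw [h2, h3, Nat.mul_add_div hK, Nat.div_eq_of_lt (by omega), add_zero]
    have h4 : (q + 1) * K = K * q + K := by ring
    omega

lemma key (K Llow : ℕ) (hK : 0 < K) (hL : 0 < Llow) (m : ZMod Llow)
    (s : ZMod (K * Llow)) :
    (((K - s.val % K) % K
        + (m - (((s.val + K - 1) / K : ℕ) : ZMod Llow)).val * K : ℕ)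
      : ZMod (K * Llow))
      = ((m.val * K : ℕ) : ZMod (K * Llow)) - s := by
  have hN : NeZero (K * Llow) := ⟨Nat.mul_ne_zero hK.ne' hL.ne'⟩
  have hLz : NeZero Llow := ⟨hL.ne'⟩
  set c : ℕ := (s.val + K - 1) / K with hc
  set n : ℕ := (K - s.val % K) % K with hn
  set w : ℕ := (m - (c : ZMod Llow)).val with hw
  have f1 : n + s.val = c * K := fact1 K hK s.val
  have f2 : c + w ≡ m.val [MOD Llow] := by
    apply (ZMod.natCast_eq_natCast_iff _ _ _).mp
    have hw' : ((w : ZMod Llow)) = m - (c : ZMod Llow) := ZMod.natCast_rightInverse _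
    have hm : ((m.val : ZMod Llow)) = m := ZMod.natCast_rightInverse _
    push_cast
    rw [hw', hm]
    ring
  have hs : ((s.val : ℕ) : ZMod (K * Llow)) = s := ZMod.natCast_rightInverse _
  rw [← hs, eq_sub_iff_add_eq, ← Nat.cast_add]
  have e : n + w * K + s.val = K * (c + w) := by
    have h5 : K * (c + w) = c * K + w * K := by ring
    omega
  have f3 : K * (c + w) ≡ K * m.val [MOD K * Llow] := f2.mul_left' K
  rw [e, mul_comm m.val K]
  exact (ZMod.natCast_eq_natCast_iff _ _ _).mpr f3



/-- every down-sampled circular shift of `x` equals a circular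
shift (on the low-resolution grid) of one of the `K²` sub-images. -/
theorem stmt_0 (K Llow : ℕ) (hK : 0 < K) (hL : 0 < Llow)
    (x : ZMod (K * Llow) × ZMod (K * Llow) → ℝ)
    (s : ZMod (K * Llow) × ZMod (K * Llow))
    (m : ZMod Llow × ZMod Llow) :
    -- high-resolution cyclic translation
    let R : (ZMod (K * Llow) × ZMod (K * Llow)) →
        (ZMod (K * Llow) × ZMod (K * Llow) → ℝ) →
        (ZMod (K * Llow) × ZMod (K * Llow) → ℝ) :=
      fun s w a => w (a.1 - s.1, a.2 - s.2)
    -- down-sampling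
    let P : (ZMod (K * Llow) × ZMod (K * Llow) → ℝ) →
        (ZMod Llow × ZMod Llow → ℝ) :=
      fun w a => w (((a.1.val * K : ℕ) : ZMod (K * Llow)),
                    ((a.2.val * K : ℕ) : ZMod (K * Llow)))
    -- sub-images
    let sub : ℕ → ℕ → (ZMod Llow × ZMod Llow → ℝ) :=
      fun n₁ n₂ ℓ => x (((n₁ + ℓ.1.val * K : ℕ) : ZMod (K * Llow)),
                        ((n₂ + ℓ.2.val * K : ℕ) : ZMod (K * Llow)))
    -- low-resolution cyclic translation
    let Rlow : (ZMod Llow × ZMod Llow) →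
        (ZMod Llow × ZMod Llow → ℝ) → (ZMod Llow × ZMod Llow → ℝ) :=
      fun t w a => w (a.1 - t.1, a.2 - t.2)
    let n₁ : ℕ := (K - s.1.val % K) % K
    let n₂ : ℕ := (K - s.2.val % K) % K
    let t : ZMod Llow × ZMod Llow :=
      ((((s.1.val + K - 1) / K : ℕ) : ZMod Llow),
       (((s.2.val + K - 1) / K : ℕ) : ZMod Llow))
    P (R s x) m =
        x (((m.1.val * K : ℕ) : ZMod (K * Llow)) - s.1,
           ((m.2.val * K : ℕ) : ZMod (K * Llow)) - s.2) ∧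
      P (R s x) m = Rlow t (sub n₁ n₂) m := by
  intro R P sub Rlow n₁ n₂ t
  refine ⟨rfl, ?_⟩
  show x _ = x _
  rw [← key K Llow hK hL m.1 s.1, ← key K Llow hK hL m.2 s.2]
end

section
/- Suppose $K \geq 2$ or $L_{low} \geq 2$. Then there exist two images $x \neq x'$ on the $L_{high} \times L_{high}$ grid (with $L_{high} = K L_{low}$) and distributions $\rho, \rho'$ such that the single-observation likelihood functions coincide: $p(y; x, \rho) = p(y; x', \rho')$ for all observations $y \in \mathbb{R}^{L_{low} \times L_{low}}$. Hence the likelihood function of the SR-MRA model does not determine the image uniquely. -/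
open Finset in
/-- non-uniqueness of the SR-MRA likelihood.  If `K ≥ 2` or
`L_low ≥ 2` there are two distinct images and two distributions whose
single-observation likelihood functions coincide for every observation. -/
theorem stmt_6 (K Llow : ℕ) [NeZero K] [NeZero Llow]
    (hbig : 2 ≤ K ∨ 2 ≤ Llow) (σ : ℝ) (hσ : 0 < σ) :
    -- likelihood of a single observation `y` given image `x` and shift
    -- distribution `ρ` on the high-resolution grid
    let p : (ZMod Llow × ZMod Llow → ℝ) →
        (ZMod (K * Llow) × ZMod (K * Llow) → ℝ) →
        (ZMod (K * Llow) × ZMod (K * Llow) → ℝ) → ℝ :=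
      fun y x ρ =>
        Finset.sum Finset.univ (fun s : ZMod (K * Llow) × ZMod (K * Llow) =>
          ρ s * Real.exp (-(1 / (2 * σ ^ 2)) *
            Finset.sum Finset.univ (fun m : ZMod Llow × ZMod Llow =>
              (y m - x (((m.1.val * K : ℕ) : ZMod (K * Llow)) - s.1,
                        ((m.2.val * K : ℕ) : ZMod (K * Llow)) - s.2)) ^ 2)))
    ∃ (x x' : ZMod (K * Llow) × ZMod (K * Llow) → ℝ)
      (ρ ρ' : ZMod (K * Llow) × ZMod (K * Llow) → ℝ),
      x ≠ x' ∧
      (∀ s, 0 ≤ ρ s) ∧ (Finset.sum Finset.univ ρ = 1) ∧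
      (∀ s, 0 ≤ ρ' s) ∧ (Finset.sum Finset.univ ρ' = 1) ∧
      ∀ y : ZMod Llow × ZMod Llow → ℝ, p y x ρ = p y x' ρ' := by
  intro p
  have hn : 1 < K * Llow := by
    rcases hbig with h | h
    · calc 1 < 2 * 1 := by norm_num
        _ ≤ K * Llow := Nat.mul_le_mul h (Nat.one_le_iff_ne_zero.mpr (NeZero.ne _))
    · calc 1 < 1 * 2 := by norm_num
        _ ≤ K * Llow := Nat.mul_le_mul (Nat.one_le_iff_ne_zero.mpr (NeZero.ne _)) h
  haveI : Fact (1 < K * Llow) := ⟨hn⟩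
  set t : ZMod (K * Llow) := 1 with ht
  refine ⟨(fun v => if v = ((0 : ZMod (K * Llow)), (0 : ZMod (K * Llow))) then 1 else 0),
    (fun v => if (v.1 - t, v.2) = ((0 : ZMod (K * Llow)), (0 : ZMod (K * Llow))) then 1 else 0),
    (fun s => if s = ((0 : ZMod (K * Llow)), (0 : ZMod (K * Llow))) then 1 else 0),
    (fun s => if s = ((-t : ZMod (K * Llow)), (0 : ZMod (K * Llow))) then 1 else 0),
    ?_, ?_, ?_, ?_, ?_, ?_⟩
  · intro h
    have h0 := congrFun h ((0 : ZMod (K * Llow)), (0 : ZMod (K * Llow)))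
    simp only [Prod.mk.injEq] at h0
    have : -t ≠ 0 := by simp [ht]
    simp [ht] at h0
  · intro s; positivity
  · simp [Finset.sum_ite_eq' Finset.univ]
  · intro s; positivity
  · simp [Finset.sum_ite_eq' Finset.univ]
  · intro y
    show Finset.sum _ _ = Finset.sum _ _
    rw [Finset.sum_eq_single ((0 : ZMod (K * Llow)), (0 : ZMod (K * Llow))),
        Finset.sum_eq_single ((-t : ZMod (K * Llow)), (0 : ZMod (K * Llow)))]
    · simp only [if_pos rfl, one_mul]
      have hsub : ∀ a : ZMod (K * Llow), a - -t - t = a - 0 := by intro a; ring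
      simp only [hsub]
    · intro b _ hb
      simp only [if_neg hb, zero_mul]
    · simp
    · intro b _ hb
      simp only [if_neg hb, zero_mul]
    · simp
end
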